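/- arXiv:1604.01584 — 2 statements merged into one kernel-verified Lean document; each statement's English description precedes it below -/
import Mathlib

section
/- Let b>0, σ>0 satisfy σ² ≤ 2b, let T>0, x₀>0. There exists a constant K > 0, depending only on b, σ, T, x₀ (and not on n), such that for every integer n > 2T the additive scheme X₀⁽ⁿ⁾ = x₀, X_k⁽ⁿ⁾ = X_{k−1}⁽ⁿ⁾ + (b − X_{k−1}⁽ⁿ⁾)T/n + σ q_k √(X_{k−1}⁽ⁿ⁾), driven by i.i.d. random variables q₁,…,qₙ with P(q_k = ±√(T/n)) = 1/2, satisfies E[ max_{0 ≤ k ≤ n} (X_k⁽ⁿ⁾)² ] ≤ K. -/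
/-!
Discounting removes the mean reversion: `W_k = (X_k - b) / (1 - T/n)^k` satisfies
`W_{k+1} = W_k + q_{k+1} σ √X_k / (1 - T/n)^{k+1}`, a martingale transform of the independent
symmetric increments. Hence `|W|` is a submartingale, and Doob's `L²` maximal inequality (proved
pathwise from `S_n² ≤ 2 S_n |W_n| - 2 ∑ S_k (|W_{k+1}| - |W_k|)` for the running maximum `S`)
gives `E max_k W_k² ≤ 4 E W_n²`. As `n > 2T`, `(1 - T/n)^{-2n} ≤ e^{4T}`, so this is controlled
by `E X_n²`, and the one-step recursion
`E X_{k+1}² ≤ (1 + σ² T / (2n)) E X_k² + (b² + σ²/2) T/n` bounds `E X_n²` uniformly in `n`.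
Finally `X_k² ≤ 2 W_k² + 2 b²`.

Every random variable involved is a continuous function of the increments, which lie almost
surely in a compact box; this is where integrability comes from.
-/

open MeasureTheory ProbabilityTheory Filter

theorem le_mul_one_add_pow_of_le_one_add_mul_add {a : ℕ → ℝ} {α β : ℝ} {n : ℕ} (hα : 0 ≤ α)
    (hβ : 0 ≤ β) (h : ∀ k < n, a (k + 1) ≤ (1 + α) * a k + β) :
    ∀ k ≤ n, a k ≤ (a 0 + k * β) * (1 + α) ^ k := by
  intro k hk
  induction k with
  | zero => simp
  | succ k ih =>
    have h1 : (1 : ℝ) ≤ (1 + α) ^ (k + 1) := one_le_pow₀ (by linarith)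
    calc a (k + 1) ≤ (1 + α) * a k + β := h k hk
      _ ≤ (1 + α) * ((a 0 + k * β) * (1 + α) ^ k) + β * (1 + α) ^ (k + 1) :=
          add_le_add (mul_le_mul_of_nonneg_left (ih (by omega)) (by linarith))
            (le_mul_of_one_le_right hβ h1)
      _ = (a 0 + (k + 1 : ℕ) * β) * (1 + α) ^ (k + 1) := by push_cast; ring

theorem one_le_exp_mul_one_sub_pow {u : ℝ} (hu₀ : 0 ≤ u) (hu : u ≤ 1 / 2) (n : ℕ) :
    1 ≤ Real.exp (2 * (n * u)) * (1 - u) ^ n := by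
  have h : 1 ≤ Real.exp (2 * u) * (1 - u) := by nlinarith [Real.add_one_le_exp (2 * u)]
  calc (1 : ℝ) ≤ (Real.exp (2 * u) * (1 - u)) ^ n := one_le_pow₀ h
    _ = _ := by rw [mul_pow, ← Real.exp_nat_mul]; ring_nf

theorem sq_partialSups_le (f : ℕ → ℝ) (n : ℕ) :
    partialSups f n ^ 2 ≤ 2 * (partialSups f n * f n) -
      2 * ∑ k ∈ Finset.range n, partialSups f k * (f (k + 1) - f k) := by
  induction n with
  | zero =>
    simp only [partialSups_zero, Finset.range_zero, Finset.sum_empty, mul_zero, sub_zero]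
    nlinarith [sq_nonneg (f 0)]
  | succ n ih =>
    have hsucc : partialSups f (n + 1) = max (partialSups f n) (f (n + 1)) := partialSups_succ f n
    rw [Finset.sum_range_succ, hsucc]
    rcases le_total (f (n + 1)) (partialSups f n) with h | h
    · rw [max_eq_left h]; nlinarith
    · rw [max_eq_right h]; nlinarith [sq_nonneg (f (n + 1) - partialSups f n)]

theorem DependsOn.partialSups_apply {ι α β : Type*} [SemilatticeSup α] {f : ℕ → (ι → β) → α}
    {s : Set ι} {n : ℕ}
    (hf : ∀ k ≤ n, DependsOn (f k) s) : DependsOn (fun v ↦ partialSups (f · v) n) s :=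
  fun _ _ h ↦ Finset.sup'_congr Finset.nonempty_Iic rfl fun k hk ↦ hf k (Finset.mem_Iic.1 hk) h

section Probability

variable {Ω : Type*} [MeasurableSpace Ω] {μ : Measure Ω}

theorem ae_eq_or_eq_neg_of_measure_eq_half [IsProbabilityMeasure μ] {ζ : Ω → ℝ}
    (hζ : Measurable ζ) {r : ℝ} (hr : r ≠ 0) (hpos : μ {ω | ζ ω = r} = 1 / 2)
    (hneg : μ {ω | ζ ω = -r} = 1 / 2) : ∀ᵐ ω ∂μ, ζ ω = r ∨ ζ ω = -r := by
  have hdisj : Disjoint {ω | ζ ω = r} {ω | ζ ω = -r} :=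
    Set.disjoint_left.2 fun ω h₁ h₂ ↦ hr (by linarith [h₁.symm.trans h₂])
  have hunion : μ ({ω | ζ ω = r} ∪ {ω | ζ ω = -r}) = 1 := by
    rw [measure_union hdisj (hζ (measurableSet_singleton _)), hpos, hneg, ENNReal.add_halves]
  exact (prob_compl_eq_zero_iff ((hζ (measurableSet_singleton _)).union
    (hζ (measurableSet_singleton _)))).2 hunion

theorem ProbabilityTheory.IndepFun.integral_comp_eq_avg [IsProbabilityMeasure μ] {β : Type*}
    [MeasurableSpace β] {Z : Ω → β} {ζ : Ω → ℝ} (hind : IndepFun Z ζ μ) (hZ : Measurable Z)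
    (hζ : Measurable ζ) {r : ℝ} (hr : r ≠ 0) (hpos : μ {ω | ζ ω = r} = 1 / 2)
    (hneg : μ {ω | ζ ω = -r} = 1 / 2) {H : β → ℝ → ℝ} (hHpos : Measurable (H · r))
    (hHneg : Measurable (H · (-r))) (hipos : Integrable (fun ω ↦ H (Z ω) r) μ)
    (hineg : Integrable (fun ω ↦ H (Z ω) (-r)) μ) :
    ∫ ω, H (Z ω) (ζ ω) ∂μ = (∫ ω, H (Z ω) r ∂μ + ∫ ω, H (Z ω) (-r) ∂μ) / 2 := by
  set A := ζ ⁻¹' {r}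
  set B := ζ ⁻¹' {-r}
  have hindep := (IndepFun_iff_Indep ζ Z μ).1 hind.symm
  have hA : MeasurableSet[MeasurableSpace.comap ζ inferInstance] A :=
    ⟨_, measurableSet_singleton r, rfl⟩
  have hB : MeasurableSet[MeasurableSpace.comap ζ inferInstance] B :=
    ⟨_, measurableSet_singleton (-r), rfl⟩
  have hsplit : (fun ω ↦ H (Z ω) (ζ ω)) =ᵐ[μ]
      fun ω ↦ A.indicator (fun ω ↦ H (Z ω) r) ω + B.indicator (fun ω ↦ H (Z ω) (-r)) ω := by
    filter_upwards [ae_eq_or_eq_neg_of_measure_eq_half hζ hr hpos hneg] with ω hω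
    rcases hω with h | h
    · have : ω ∉ B := fun hB ↦ hr (by linarith [h.symm.trans hB])
      simp [A, B, h, this]
    · have : ω ∉ A := fun hA ↦ hr (by linarith [hA.symm.trans h])
      simp [A, B, h, this]
  rw [integral_congr_ae hsplit, integral_add (hipos.indicator (hζ.comap_le _ hA))
      (hineg.indicator (hζ.comap_le _ hB)), integral_indicator (hζ.comap_le _ hA),
    integral_indicator (hζ.comap_le _ hB),
    hindep.setIntegral_eq_mul hζ.comap_le hZ.aemeasurable hA hHpos.aestronglyMeasurable,
    hindep.setIntegral_eq_mul hζ.comap_le hZ.aemeasurable hB hHneg.aestronglyMeasurable]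
  simp only [measureReal_def, A, B, Set.preimage, Set.mem_singleton_iff, hpos, hneg]
  norm_num
  ring

theorem integrable_comp_of_continuous_of_ae_abs_le [IsFiniteMeasure μ] {ι : Type*} [Countable ι]
    {P : Ω → ι → ℝ} (hP : Measurable P) {r : ℝ} (hPr : ∀ᵐ ω ∂μ, ∀ i, |P ω i| ≤ r)
    {G : (ι → ℝ) → ℝ} (hG : Continuous G) : Integrable (fun ω ↦ G (P ω)) μ := by
  obtain ⟨C, hC⟩ := (isCompact_univ_pi fun _ ↦ isCompact_Icc (a := -r) (b := r))
    |>.exists_bound_of_continuousOn hG.continuousOn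
  refine .of_bound (hG.measurable.comp hP).aestronglyMeasurable C ?_
  filter_upwards [hPr] with ω hω
  exact hC _ fun i _ ↦ abs_le.1 (hω i)

/-- Doob's `L²` maximal inequality, for a process that is a submartingale against the weights
given by its own running maximum. -/
theorem integral_sq_partialSups_le {f : ℕ → Ω → ℝ} {n : ℕ}
    (hS : Integrable (fun ω ↦ partialSups (f · ω) n ^ 2) μ)
    (hfn : Integrable (fun ω ↦ f n ω ^ 2) μ)
    (hSf : ∀ k < n, Integrable (fun ω ↦ partialSups (f · ω) k * f k ω) μ)
    (hSf' : ∀ k < n, Integrable (fun ω ↦ partialSups (f · ω) k * f (k + 1) ω) μ)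
    (hsub : ∀ k < n, ∫ ω, partialSups (f · ω) k * f k ω ∂μ ≤
      ∫ ω, partialSups (f · ω) k * f (k + 1) ω ∂μ) :
    ∫ ω, partialSups (f · ω) n ^ 2 ∂μ ≤ 4 * ∫ ω, f n ω ^ 2 ∂μ := by
  have hincr : ∀ k ∈ Finset.range n, Integrable (fun ω ↦
      partialSups (f · ω) k * f (k + 1) ω - partialSups (f · ω) k * f k ω) μ :=
    fun k hk ↦ (hSf' k (Finset.mem_range.1 hk)).sub (hSf k (Finset.mem_range.1 hk))
  -- the pathwise inequality combined with `2 S f ≤ S² / 2 + 2 f²`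
  have hpath : ∀ ω, partialSups (f · ω) n ^ 2 / 2 ≤ 2 * f n ω ^ 2 - 2 * ∑ k ∈ Finset.range n,
      (partialSups (f · ω) k * f (k + 1) ω - partialSups (f · ω) k * f k ω) := fun ω ↦ by
    have := sq_partialSups_le (f · ω) n
    simp only [mul_sub] at this
    nlinarith [sq_nonneg (partialSups (f · ω) n - 2 * f n ω)]
  have hint := integral_mono (hS.div_const 2)
    ((hfn.const_mul 2).sub ((integrable_finsetSum _ hincr).const_mul 2)) hpath
  simp only [Pi.sub_apply] at hint
  rw [integral_div, integral_sub (hfn.const_mul 2) ((integrable_finsetSum _ hincr).const_mul 2),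
    integral_const_mul, integral_const_mul, integral_finsetSum _ hincr] at hint
  have hsum : 0 ≤ ∑ k ∈ Finset.range n, ∫ ω,
      (partialSups (f · ω) k * f (k + 1) ω - partialSups (f · ω) k * f k ω) ∂μ :=
    Finset.sum_nonneg fun k hk ↦ by
      rw [integral_sub (hSf' k (Finset.mem_range.1 hk)) (hSf k (Finset.mem_range.1 hk))]
      exact sub_nonneg.2 (hsub k (Finset.mem_range.1 hk))
  linarith

structure IsScaledRademacher (ξ : ℕ → Ω → ℝ) (n : ℕ) (r : ℝ) (μ : Measure Ω) : Prop where
  measurable : ∀ i, Measurable (ξ i)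
  indep : iIndepFun (fun i : Fin n ↦ ξ i) μ
  measure_eq_pos : ∀ i < n, μ {ω | ξ i ω = r} = 1 / 2
  measure_eq_neg : ∀ i < n, μ {ω | ξ i ω = -r} = 1 / 2

/-- Cutting the driver off after time `k` makes it almost surely bounded in every coordinate. -/
def truncDriver (ξ : ℕ → Ω → ℝ) (k : ℕ) (ω : Ω) (i : ℕ) : ℝ := if i < k then ξ i ω else 0

variable {ξ : ℕ → Ω → ℝ} {n k : ℕ} {r : ℝ}

theorem measurable_truncDriver (hξ : ∀ i, Measurable (ξ i)) (k : ℕ) :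
    Measurable (truncDriver ξ k) :=
  measurable_pi_lambda _ fun i ↦ by
    by_cases h : i < k <;> simp only [truncDriver, h, if_true, if_false]
    exacts [hξ i, measurable_const]

omit [MeasurableSpace Ω] in
theorem truncDriver_of_lt {i : ℕ} (h : i < k) (ω : Ω) : truncDriver ξ k ω i = ξ i ω := if_pos h

theorem ProbabilityTheory.iIndepFun.indepFun_truncDriver (hind : iIndepFun (fun i : Fin n ↦ ξ i) μ)
    (hξ : ∀ i, Measurable (ξ i)) (hk : k < n) : IndepFun (truncDriver ξ k) (ξ k) μ := by
  let past : Finset (Fin n) := Finset.Iio ⟨k, hk⟩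
  let extend (w : past → ℝ) (i : ℕ) : ℝ :=
    if h : i < k then w ⟨⟨i, h.trans hk⟩, Finset.mem_Iio.2 h⟩ else 0
  have hextend : Measurable extend := measurable_pi_lambda _ fun i ↦ by
    by_cases h : i < k
    · simpa only [extend, h, dif_pos] using measurable_pi_apply _
    · simp only [extend, h, dif_neg, not_false_eq_true, measurable_const]
  have := (hind.indepFun_finset past {⟨k, hk⟩}
    (Finset.disjoint_singleton_right.2 (by simp [past])) fun i ↦ hξ i).comp hextend
    (measurable_pi_apply ⟨⟨k, hk⟩, Finset.mem_singleton_self _⟩)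
  convert this using 1
  · ext ω i
    by_cases h : i < k <;> simp [truncDriver, extend, h]
  · rfl

namespace IsScaledRademacher

variable [IsProbabilityMeasure μ] (hξ : IsScaledRademacher ξ n r μ) (hr : 0 < r)
include hξ hr

theorem ae_abs_truncDriver_le : ∀ᵐ ω ∂μ, ∀ i, |truncDriver ξ n ω i| ≤ r := by
  rw [ae_all_iff]
  intro i
  by_cases hi : i < n
  · filter_upwards [ae_eq_or_eq_neg_of_measure_eq_half (hξ.measurable i) hr.ne'
      (hξ.measure_eq_pos i hi) (hξ.measure_eq_neg i hi)] with ω hω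
    rcases hω with h | h <;> simp [truncDriver, hi, h, abs_of_pos hr]
  · exact .of_forall fun ω ↦ by simp [truncDriver, hi, hr.le]

theorem integrable_comp {G : (ℕ → ℝ) → ℝ} (hG : Continuous G) :
    Integrable (fun ω ↦ G (truncDriver ξ n ω)) μ :=
  integrable_comp_of_continuous_of_ae_abs_le (measurable_truncDriver hξ.measurable n)
    (hξ.ae_abs_truncDriver_le hr) hG

theorem integral_comp_eq_avg (hk : k < n) {H : (ℕ → ℝ) → ℝ → ℝ}
    (hH : Continuous (Function.uncurry H)) (hdep : ∀ t, DependsOn (H · t) (Set.Iio k)) :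
    ∫ ω, H (truncDriver ξ n ω) (truncDriver ξ n ω k) ∂μ =
      (∫ ω, H (truncDriver ξ n ω) r ∂μ + ∫ ω, H (truncDriver ξ n ω) (-r) ∂μ) / 2 := by
  have hpast : ∀ ω t, H (truncDriver ξ n ω) t = H (truncDriver ξ k ω) t := fun ω t ↦
    hdep t fun i hi ↦ by rw [truncDriver_of_lt (hi.trans hk), truncDriver_of_lt hi]
  have hcont : ∀ t, Continuous (H · t) := fun t ↦ hH.comp (continuous_id.prodMk continuous_const)
  have hint : ∀ t, Integrable (fun ω ↦ H (truncDriver ξ k ω) t) μ := fun t ↦ by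
    simpa only [hpast] using hξ.integrable_comp hr (hcont t)
  simp only [hpast, truncDriver_of_lt hk]
  exact (hξ.indep.indepFun_truncDriver hξ.measurable hk).integral_comp_eq_avg
    (measurable_truncDriver hξ.measurable k) (hξ.measurable k) hr.ne' (hξ.measure_eq_pos k hk)
    (hξ.measure_eq_neg k hk) (hcont r).measurable (hcont (-r)).measurable (hint r) (hint (-r))

theorem integral_mul_abs_le_integral_mul_abs_add (hk : k < n) {F G g : (ℕ → ℝ) → ℝ}
    (hF : Continuous F) (hG : Continuous G) (hg : Continuous g) (hF₀ : ∀ v, 0 ≤ F v)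
    (hFd : DependsOn F (Set.Iio k)) (hGd : DependsOn G (Set.Iio k))
    (hgd : DependsOn g (Set.Iio k)) :
    ∫ ω, F (truncDriver ξ n ω) * |G (truncDriver ξ n ω)| ∂μ ≤
      ∫ ω, F (truncDriver ξ n ω) *
        |G (truncDriver ξ n ω) + truncDriver ξ n ω k * g (truncDriver ξ n ω)| ∂μ := by
  have hH : ∀ t, Continuous fun v ↦ F v * |G v + t * g v| := fun t ↦ by fun_prop
  rw [hξ.integral_comp_eq_avg hr hk (H := fun v t ↦ F v * |G v + t * g v|)
    (by fun_prop) fun t v w h ↦ by simp only [hFd h, hGd h, hgd h],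
    ← integral_add (hξ.integrable_comp hr (hH r)) (hξ.integrable_comp hr (hH (-r))),
    ← integral_div]
  refine integral_mono (hξ.integrable_comp hr (hF.mul hG.abs))
    (((hξ.integrable_comp hr (hH r)).add (hξ.integrable_comp hr (hH (-r)))).div_const 2)
    fun ω ↦ ?_
  set v := truncDriver ξ n ω
  have : 2 * |G v| ≤ |G v + r * g v| + |G v + -r * g v| :=
    calc 2 * |G v| = |(G v + r * g v) + (G v + -r * g v)| := by
          rw [← abs_two, ← abs_mul]; ring_nf
      _ ≤ _ := abs_add_le _ _
  nlinarith [hF₀ v]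

end IsScaledRademacher

end Probability

section Scheme

noncomputable def cirStep (b σ u y t : ℝ) : ℝ := y + (b - y) * u + σ * t * √y

/-- Step `k + 1` consumes `v k`, so the scheme driven by `q₁, q₂, …` is
`cirEuler b σ x₀ (T / n) (fun i ↦ q (i + 1))`. -/
noncomputable def cirEuler (b σ x₀ u : ℝ) (v : ℕ → ℝ) : ℕ → ℝ
  | 0 => x₀
  | k + 1 => cirStep b σ u (cirEuler b σ x₀ u v k) (v k)

noncomputable def cirEulerDiscounted (b σ x₀ u : ℝ) (v : ℕ → ℝ) (k : ℕ) : ℝ :=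
  (cirEuler b σ x₀ u v k - b) / (1 - u) ^ k

variable {b σ x₀ u : ℝ}

@[fun_prop]
theorem continuous_cirEuler (k : ℕ) : Continuous fun v ↦ cirEuler b σ x₀ u v k := by
  induction k with
  | zero => exact continuous_const
  | succ k ih => simp only [cirEuler, cirStep]; fun_prop

@[fun_prop]
theorem continuous_cirEulerDiscounted (k : ℕ) :
    Continuous fun v ↦ cirEulerDiscounted b σ x₀ u v k :=
  ((continuous_cirEuler k).sub continuous_const).div_const _

theorem dependsOn_cirEuler (k : ℕ) : DependsOn (fun v ↦ cirEuler b σ x₀ u v k) (Set.Iio k) := by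
  induction k with
  | zero => exact fun _ _ _ ↦ rfl
  | succ k ih =>
    intro v w h
    have hk : cirEuler b σ x₀ u v k = cirEuler b σ x₀ u w k :=
      ih fun i hi ↦ h i (hi.trans k.lt_succ_self)
    simp only [cirEuler, hk, h k k.lt_succ_self]

theorem dependsOn_cirEulerDiscounted (k : ℕ) :
    DependsOn (fun v ↦ cirEulerDiscounted b σ x₀ u v k) (Set.Iio k) := fun _ _ h ↦ by
  simp only [cirEulerDiscounted, dependsOn_cirEuler k h]

theorem cirEulerDiscounted_succ (hu : u ≠ 1) (v : ℕ → ℝ) (k : ℕ) :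
    cirEulerDiscounted b σ x₀ u v (k + 1) = cirEulerDiscounted b σ x₀ u v k +
      v k * (σ * √(cirEuler b σ x₀ u v k) / (1 - u) ^ (k + 1)) := by
  have : 1 - u ≠ 0 := sub_ne_zero.2 (Ne.symm hu)
  simp only [cirEulerDiscounted, cirEuler, cirStep]
  field_simp
  ring

theorem avg_sq_cirStep_le (hu₀ : 0 ≤ u) (hu₁ : u ≤ 1) (y : ℝ) :
    (cirStep b σ u y √u ^ 2 + cirStep b σ u y (-√u) ^ 2) / 2 ≤
      (1 + σ ^ 2 / 2 * u) * y ^ 2 + (b ^ 2 + σ ^ 2 / 2) * u := by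
  have hsq : √y ^ 2 ≤ (1 + y ^ 2) / 2 := by
    rcases le_total 0 y with hy | hy
    · rw [Real.sq_sqrt hy]; nlinarith [sq_nonneg (y - 1)]
    · rw [Real.sqrt_eq_zero_of_nonpos hy]; nlinarith [sq_nonneg y]
  have hcross : (cirStep b σ u y √u ^ 2 + cirStep b σ u y (-√u) ^ 2) / 2 =
      (y + (b - y) * u) ^ 2 + σ ^ 2 * u * √y ^ 2 := by
    simp only [cirStep]; linear_combination σ ^ 2 * √y ^ 2 * Real.sq_sqrt hu₀
  have hmean : (y + (b - y) * u) ^ 2 ≤ (1 - u) * y ^ 2 + u * b ^ 2 := by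
    nlinarith [mul_nonneg (mul_nonneg hu₀ (sub_nonneg.2 hu₁)) (sq_nonneg (y - b))]
  have hvar : σ ^ 2 * u * √y ^ 2 ≤ σ ^ 2 * u * ((1 + y ^ 2) / 2) := by gcongr
  rw [hcross]; nlinarith

theorem sq_cirEuler_le (hu₀ : 0 ≤ u) (hu₁ : u < 1) (v : ℕ → ℝ) (k : ℕ) :
    cirEuler b σ x₀ u v k ^ 2 ≤ 2 * cirEulerDiscounted b σ x₀ u v k ^ 2 + 2 * b ^ 2 := by
  have hρ : 0 < (1 - u) ^ k := pow_pos (by linarith) k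
  have hρ1 : ((1 - u) ^ k) ^ 2 ≤ 1 := pow_le_one₀ hρ.le (pow_le_one₀ (by linarith) (by linarith))
  have hX : cirEuler b σ x₀ u v k = cirEulerDiscounted b σ x₀ u v k * (1 - u) ^ k + b := by
    rw [cirEulerDiscounted, div_mul_cancel₀ _ hρ.ne']; ring
  rw [hX]
  nlinarith [mul_le_of_le_one_right (sq_nonneg (cirEulerDiscounted b σ x₀ u v k)) hρ1,
    sq_nonneg (cirEulerDiscounted b σ x₀ u v k * (1 - u) ^ k - b)]

theorem partialSups_sq_cirEuler_le (hu₀ : 0 ≤ u) (hu₁ : u < 1) (v : ℕ → ℝ) (n : ℕ) :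
    partialSups (fun k ↦ cirEuler b σ x₀ u v k ^ 2) n ≤
      2 * partialSups (fun k ↦ |cirEulerDiscounted b σ x₀ u v k|) n ^ 2 + 2 * b ^ 2 :=
  partialSups_le _ _ _ fun k hk ↦ by
    have hW := le_partialSups_of_le (fun j ↦ |cirEulerDiscounted b σ x₀ u v j|) hk
    nlinarith [sq_cirEuler_le (b := b) (σ := σ) (x₀ := x₀) hu₀ hu₁ v k,
      sq_abs (cirEulerDiscounted b σ x₀ u v k), abs_nonneg (cirEulerDiscounted b σ x₀ u v k)]

theorem sq_cirEulerDiscounted_le (hu₀ : 0 ≤ u) (hu : u ≤ 1 / 2) (v : ℕ → ℝ) (n : ℕ) :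
    cirEulerDiscounted b σ x₀ u v n ^ 2 ≤
      Real.exp (4 * (n * u)) * (2 * cirEuler b σ x₀ u v n ^ 2 + 2 * b ^ 2) := by
  have hρ : 0 < ((1 - u) ^ n) ^ 2 := pow_pos (pow_pos (by linarith) n) 2
  have h4 : 1 ≤ Real.exp (4 * (n * u)) * ((1 - u) ^ n) ^ 2 := by
    have := one_le_pow₀ (n := 2) (one_le_exp_mul_one_sub_pow hu₀ hu n)
    rwa [mul_pow, ← Real.exp_nat_mul, show ((2 : ℕ) : ℝ) * (2 * (n * u)) = 4 * (n * u) by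
      push_cast; ring] at this
  rw [cirEulerDiscounted, div_pow, div_le_iff₀ hρ]
  nlinarith [sq_nonneg (cirEuler b σ x₀ u v n - b), sq_nonneg (cirEuler b σ x₀ u v n + b),
    Real.exp_pos (4 * (n * u))]

end Scheme

namespace IsScaledRademacher

variable {Ω : Type*} [MeasurableSpace Ω] {μ : Measure Ω} [IsProbabilityMeasure μ]
  {ξ : ℕ → Ω → ℝ} {n : ℕ} {b σ x₀ u : ℝ} (hξ : IsScaledRademacher ξ n √u μ) (hu : 0 < u)
include hξ hu

theorem integral_sq_cirEuler_succ_le (hu₁ : u ≤ 1) {k : ℕ} (hk : k < n) :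
    ∫ ω, cirEuler b σ x₀ u (truncDriver ξ n ω) (k + 1) ^ 2 ∂μ ≤
      (1 + σ ^ 2 / 2 * u) * ∫ ω, cirEuler b σ x₀ u (truncDriver ξ n ω) k ^ 2 ∂μ +
        (b ^ 2 + σ ^ 2 / 2) * u := by
  have hr : 0 < √u := Real.sqrt_pos.2 hu
  have hY : Integrable (fun ω ↦ cirEuler b σ x₀ u (truncDriver ξ n ω) k ^ 2) μ :=
    hξ.integrable_comp hr ((continuous_cirEuler k).pow 2)
  have hH : ∀ t, Continuous fun v ↦ cirStep b σ u (cirEuler b σ x₀ u v k) t ^ 2 :=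
    fun t ↦ by unfold cirStep; fun_prop
  calc ∫ ω, cirEuler b σ x₀ u (truncDriver ξ n ω) (k + 1) ^ 2 ∂μ
      = (∫ ω, cirStep b σ u (cirEuler b σ x₀ u (truncDriver ξ n ω) k) √u ^ 2 ∂μ +
          ∫ ω, cirStep b σ u (cirEuler b σ x₀ u (truncDriver ξ n ω) k) (-√u) ^ 2 ∂μ) / 2 :=
        hξ.integral_comp_eq_avg hr hk
          (H := fun v t ↦ cirStep b σ u (cirEuler b σ x₀ u v k) t ^ 2)
          (by unfold cirStep Function.uncurry; fun_prop)
          fun t v w h ↦ by simp only [dependsOn_cirEuler k h]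
    _ ≤ ∫ ω, ((1 + σ ^ 2 / 2 * u) * cirEuler b σ x₀ u (truncDriver ξ n ω) k ^ 2 +
          (b ^ 2 + σ ^ 2 / 2) * u) ∂μ := by
        rw [← integral_add (hξ.integrable_comp hr (hH _)) (hξ.integrable_comp hr (hH _)),
          ← integral_div]
        exact integral_mono (((hξ.integrable_comp hr (hH _)).add
          (hξ.integrable_comp hr (hH _))).div_const 2) ((hY.const_mul _).add
          (integrable_const _)) fun ω ↦ avg_sq_cirStep_le hu.le hu₁ _
    _ = _ := by
        rw [integral_add (hY.const_mul _) (integrable_const _), integral_const_mul]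
        simp

theorem integral_sq_cirEuler_le (hu₁ : u ≤ 1) :
    ∫ ω, cirEuler b σ x₀ u (truncDriver ξ n ω) n ^ 2 ∂μ ≤
      (x₀ ^ 2 + n * u * (b ^ 2 + σ ^ 2 / 2)) * Real.exp (n * u * (σ ^ 2 / 2)) := by
  have hexp : (1 + σ ^ 2 / 2 * u) ^ n ≤ Real.exp (n * u * (σ ^ 2 / 2)) := by
    rw [show n * u * (σ ^ 2 / 2) = n * (σ ^ 2 / 2 * u) by ring, Real.exp_nat_mul]
    exact pow_le_pow_left₀ (by positivity) (by linarith [Real.add_one_le_exp (σ ^ 2 / 2 * u)]) n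
  calc _ ≤ (x₀ ^ 2 + n * ((b ^ 2 + σ ^ 2 / 2) * u)) * (1 + σ ^ 2 / 2 * u) ^ n := by
        simpa [cirEuler] using le_mul_one_add_pow_of_le_one_add_mul_add
          (a := fun k ↦ ∫ ω, cirEuler b σ x₀ u (truncDriver ξ n ω) k ^ 2 ∂μ) (by positivity)
          (by positivity) (fun k hk ↦ hξ.integral_sq_cirEuler_succ_le hu hu₁ hk) n le_rfl
    _ = (x₀ ^ 2 + n * u * (b ^ 2 + σ ^ 2 / 2)) * (1 + σ ^ 2 / 2 * u) ^ n := by ring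
    _ ≤ _ := by gcongr

theorem integral_sq_partialSups_cirEulerDiscounted_le (hu₁ : u < 1) :
    ∫ ω, partialSups (fun k ↦ |cirEulerDiscounted b σ x₀ u (truncDriver ξ n ω) k|) n ^ 2 ∂μ ≤
      4 * ∫ ω, cirEulerDiscounted b σ x₀ u (truncDriver ξ n ω) n ^ 2 ∂μ := by
  have hr : 0 < √u := Real.sqrt_pos.2 hu
  have hS : ∀ k, Continuous fun v ↦ partialSups (fun j ↦ |cirEulerDiscounted b σ x₀ u v j|) k :=
    fun k ↦ Continuous.partialSups_apply fun j _ ↦ by fun_prop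
  have hSd : ∀ k, DependsOn (fun v ↦ partialSups (fun j ↦ |cirEulerDiscounted b σ x₀ u v j|) k)
      (Set.Iio k) := fun k ↦ DependsOn.partialSups_apply fun j hj _ _ h ↦
    congrArg abs (dependsOn_cirEulerDiscounted j fun i hi ↦ h i (lt_of_lt_of_le hi hj))
  have hSW : ∀ j k, Integrable (fun ω ↦ partialSups (fun i ↦ |cirEulerDiscounted b σ x₀ u
      (truncDriver ξ n ω) i|) j * |cirEulerDiscounted b σ x₀ u (truncDriver ξ n ω) k|) μ :=
    fun j k ↦ hξ.integrable_comp hr ((hS j).mul (continuous_cirEulerDiscounted k).abs)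
  have hsub : ∀ k < n, ∫ ω, partialSups (fun i ↦ |cirEulerDiscounted b σ x₀ u
      (truncDriver ξ n ω) i|) k * |cirEulerDiscounted b σ x₀ u (truncDriver ξ n ω) k| ∂μ ≤
      ∫ ω, partialSups (fun i ↦ |cirEulerDiscounted b σ x₀ u (truncDriver ξ n ω) i|) k *
        |cirEulerDiscounted b σ x₀ u (truncDriver ξ n ω) (k + 1)| ∂μ := fun k hk ↦ by
    simp only [cirEulerDiscounted_succ hu₁.ne]
    exact hξ.integral_mul_abs_le_integral_mul_abs_add hr hk
      (g := fun v ↦ σ * √(cirEuler b σ x₀ u v k) / (1 - u) ^ (k + 1)) (hS k)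
      (continuous_cirEulerDiscounted k) (by fun_prop) (fun v ↦ (abs_nonneg _).trans
        (le_partialSups_of_le (fun j ↦ |cirEulerDiscounted b σ x₀ u v j|) (Nat.zero_le k)))
      (hSd k) (dependsOn_cirEulerDiscounted k) fun v w h ↦ by simp only [dependsOn_cirEuler k h]
  simpa only [sq_abs] using integral_sq_partialSups_le (μ := μ)
    (f := fun k ω ↦ |cirEulerDiscounted b σ x₀ u (truncDriver ξ n ω) k|)
    (hξ.integrable_comp hr ((hS n).pow 2))
    (hξ.integrable_comp hr ((continuous_cirEulerDiscounted n).abs.pow 2))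
    (fun k _ ↦ hSW k k) (fun k _ ↦ hSW k (k + 1)) hsub

theorem integral_sq_cirEulerDiscounted_le (hu₂ : u ≤ 1 / 2) :
    ∫ ω, cirEulerDiscounted b σ x₀ u (truncDriver ξ n ω) n ^ 2 ∂μ ≤
      Real.exp (4 * (n * u)) * (2 * ((x₀ ^ 2 + n * u * (b ^ 2 + σ ^ 2 / 2)) *
        Real.exp (n * u * (σ ^ 2 / 2))) + 2 * b ^ 2) := by
  have hY : Integrable (fun ω ↦ cirEuler b σ x₀ u (truncDriver ξ n ω) n ^ 2) μ :=
    hξ.integrable_comp (Real.sqrt_pos.2 hu) ((continuous_cirEuler n).pow 2)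
  calc _ ≤ ∫ ω, Real.exp (4 * (n * u)) *
          (2 * cirEuler b σ x₀ u (truncDriver ξ n ω) n ^ 2 + 2 * b ^ 2) ∂μ :=
        integral_mono (hξ.integrable_comp (Real.sqrt_pos.2 hu)
          ((continuous_cirEulerDiscounted n).pow 2)) (((hY.const_mul 2).add
          (integrable_const _)).const_mul _) fun ω ↦ sq_cirEulerDiscounted_le hu.le hu₂ _ n
    _ = Real.exp (4 * (n * u)) *
          (2 * ∫ ω, cirEuler b σ x₀ u (truncDriver ξ n ω) n ^ 2 ∂μ + 2 * b ^ 2) := by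
        rw [integral_const_mul, integral_add (hY.const_mul 2) (integrable_const _),
          integral_const_mul]
        simp
    _ ≤ _ := by grw [hξ.integral_sq_cirEuler_le hu (by linarith)]

theorem integral_partialSups_sq_cirEuler_le (hu₂ : u ≤ 1 / 2) :
    ∫ ω, partialSups (fun k ↦ cirEuler b σ x₀ u (truncDriver ξ n ω) k ^ 2) n ∂μ ≤
      16 * Real.exp (4 * (n * u)) * ((x₀ ^ 2 + n * u * (b ^ 2 + σ ^ 2 / 2)) *
        Real.exp (n * u * (σ ^ 2 / 2)) + b ^ 2) + 2 * b ^ 2 := by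
  have hr : 0 < √u := Real.sqrt_pos.2 hu
  have hS : Continuous fun v ↦ partialSups (fun k ↦ |cirEulerDiscounted b σ x₀ u v k|) n :=
    Continuous.partialSups_apply fun k _ ↦ by fun_prop
  have hS2 : Integrable (fun ω ↦ partialSups (fun k ↦
      |cirEulerDiscounted b σ x₀ u (truncDriver ξ n ω) k|) n ^ 2) μ :=
    hξ.integrable_comp hr (hS.pow 2)
  calc _ ≤ ∫ ω, (2 * partialSups (fun k ↦
          |cirEulerDiscounted b σ x₀ u (truncDriver ξ n ω) k|) n ^ 2 + 2 * b ^ 2) ∂μ :=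
        integral_mono (hξ.integrable_comp hr (G := fun v ↦
            partialSups (fun k ↦ cirEuler b σ x₀ u v k ^ 2) n)
          (Continuous.partialSups_apply fun k _ ↦ (continuous_cirEuler k).pow 2))
          ((hS2.const_mul 2).add (integrable_const _))
          fun ω ↦ partialSups_sq_cirEuler_le hu.le (by linarith) _ n
    _ = 2 * ∫ ω, partialSups (fun k ↦
          |cirEulerDiscounted b σ x₀ u (truncDriver ξ n ω) k|) n ^ 2 ∂μ + 2 * b ^ 2 := by
        rw [integral_add (hS2.const_mul 2) (integrable_const _), integral_const_mul]
        simp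
    _ ≤ _ := by
        grw [hξ.integral_sq_partialSups_cirEulerDiscounted_le hu (by linarith),
          hξ.integral_sq_cirEulerDiscounted_le hu hu₂]
        linarith

end IsScaledRademacher

theorem cir_euler_max_second_moment_bound_general (b σ T x₀ : ℝ)
    (hT : 0 < T) :
    ∃ K > 0, ∀ (n : ℕ), 2 * T < (n : ℝ) →
      ∀ (Ω : Type) (_ : MeasurableSpace Ω) (μ : Measure Ω), IsProbabilityMeasure μ →
      ∀ (q : ℕ → Ω → ℝ), (∀ k, Measurable (q k)) →
      iIndepFun (fun i : Fin n => q (i + 1)) μ →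
      (∀ k, 1 ≤ k → k ≤ n →
        μ {ω | q k ω = Real.sqrt (T / n)} = 1 / 2 ∧
          μ {ω | q k ω = -Real.sqrt (T / n)} = 1 / 2) →
      ∀ (X : ℕ → Ω → ℝ), (∀ ω, X 0 ω = x₀) →
      (∀ k, 1 ≤ k → k ≤ n → ∀ ω,
        X k ω = X (k - 1) ω + (b - X (k - 1) ω) * T / n
          + σ * q k ω * Real.sqrt (X (k - 1) ω)) →
      ∫ ω, (Finset.Iic n).sup' Finset.nonempty_Iic (fun k => (X k ω) ^ 2) ∂μ ≤ K := by
  refine ⟨16 * Real.exp (4 * T) * ((x₀ ^ 2 + T * (b ^ 2 + σ ^ 2 / 2)) *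
    Real.exp (T * (σ ^ 2 / 2)) + b ^ 2) + 2 * b ^ 2 + 1, by positivity, ?_⟩
  intro n hn Ω _ μ _ q hq hind hq2 X hX0 hXrec
  have hn₀ : (0 : ℝ) < n := by linarith
  have hnu : n * (T / n) = T := mul_div_cancel₀ T hn₀.ne'
  set ξ : ℕ → Ω → ℝ := fun i ↦ q (i + 1)
  have hξ : IsScaledRademacher ξ n √(T / n) μ := ⟨fun i ↦ hq (i + 1), hind,
    fun i hi ↦ (hq2 (i + 1) (by omega) hi).1, fun i hi ↦ (hq2 (i + 1) (by omega) hi).2⟩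
  have hX : ∀ k ≤ n, ∀ ω, X k ω = cirEuler b σ x₀ (T / n) (truncDriver ξ n ω) k := by
    intro k hk ω
    induction k with
    | zero => exact hX0 ω
    | succ k ih =>
      rw [hXrec (k + 1) (by omega) hk ω, Nat.add_sub_cancel, ih (by omega)]
      simp only [cirEuler, cirStep, truncDriver_of_lt hk]
      ring
  have hbound := hξ.integral_partialSups_sq_cirEuler_le (b := b) (σ := σ) (x₀ := x₀)
    (div_pos hT hn₀) (by rw [div_le_iff₀ hn₀]; linarith)
  rw [hnu] at hbound
  calc _ = ∫ ω, partialSups (fun k ↦ cirEuler b σ x₀ (T / n) (truncDriver ξ n ω) k ^ 2) n ∂μ :=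
        integral_congr_ae (.of_forall fun ω ↦ Finset.sup'_congr _ rfl fun k hk ↦ by
          rw [hX k (Finset.mem_Iic.1 hk)])
    _ ≤ _ := by linarith

/-- There is a constant `K > 0` depending only on `b, σ, T, x₀` such that
for every integer `n > 2T`, the additive Euler scheme for the CIR process driven by
i.i.d. variables `q_k = ±√(T/n)` (probability 1/2 each) satisfies
`E[max_{0 ≤ k ≤ n} (X_k)²] ≤ K`. -/
theorem cir_euler_max_second_moment_bound (b σ T x₀ : ℝ)
    (hb : 0 < b) (hσ : 0 < σ) (hσ2 : σ ^ 2 ≤ 2 * b)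
    (hT : 0 < T) (hx₀ : 0 < x₀) :
    ∃ K > 0, ∀ (n : ℕ), 2 * T < (n : ℝ) →
      ∀ (Ω : Type) (_ : MeasurableSpace Ω) (μ : Measure Ω), IsProbabilityMeasure μ →
      ∀ (q : ℕ → Ω → ℝ), (∀ k, Measurable (q k)) →
      iIndepFun (fun i : Fin n => q (i + 1)) μ →
      (∀ k, 1 ≤ k → k ≤ n →
        μ {ω | q k ω = Real.sqrt (T / n)} = 1 / 2 ∧
          μ {ω | q k ω = -Real.sqrt (T / n)} = 1 / 2) →
      ∀ (X : ℕ → Ω → ℝ), (∀ ω, X 0 ω = x₀) →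
      (∀ k, 1 ≤ k → k ≤ n → ∀ ω,
        X k ω = X (k - 1) ω + (b - X (k - 1) ω) * T / n
          + σ * q k ω * Real.sqrt (X (k - 1) ω)) →
      ∫ ω, (Finset.Iic n).sup' Finset.nonempty_Iic (fun k => (X k ω) ^ 2) ∂μ ≤ K :=
  cir_euler_max_second_moment_bound_general b σ T x₀ hT
end

section
/- Let b>0, σ>0 satisfy σ² ≤ 2b, let T>0, x₀>0. For each integer n > 2T and each C>0, let X⁽ⁿ⁾ be the additive Euler scheme and X⁽ⁿ'ᶜ⁾ the truncated Euler scheme driven by the same i.i.d. variables q₁,…,qₙ with P(q_k = ±√(T/n)) = 1/2 (that is, X₀⁽ⁿ⁾ = X₀⁽ⁿ'ᶜ⁾ = x₀, X_k⁽ⁿ⁾ = X_{k−1}⁽ⁿ⁾ + (b − X_{k−1}⁽ⁿ⁾)T/n + σ q_k √(X_{k−1}⁽ⁿ⁾) and X_k⁽ⁿ'ᶜ⁾ = X_{k−1}⁽ⁿ'ᶜ⁾ + (b − min(X_{k−1}⁽ⁿ'ᶜ⁾,C))T/n + σ q_k √(min(X_{k−1}⁽ⁿ'ᶜ⁾,C))).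 Then there is a constant K depending only on b, σ, T, x₀ such that for all n > 2T and all C > 0, P( ∃ k, 0 ≤ k ≤ n, with X_k⁽ⁿ⁾ ≠ X_k⁽ⁿ'ᶜ⁾ ) ≤ K / C²; in particular sup_{n > 2T} P( ∃ k ≤ n: X_k⁽ⁿ⁾ ≠ X_k⁽ⁿ'ᶜ⁾ ) → 0 as C → ∞. -/
/-!
Let `V` be the Euler chain stopped at the first time it exceeds `C`. Up to that time the
additive scheme `X` and the truncated scheme `Y` coincide, so `X ≠ Y` somewhere forces
`V_n > C`. As long as `V_m ≤ C`, expanding the square of one Euler step with `q² = T/n` gives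
`V_{m+1}² = V_m² + D(V_m) + N(V_m) q_{m+1}`, where the drift term `D` is at most `(T/n) K₀`
with `K₀ = b² + (b + σ²)²`, and the noise term has mean zero because `q_{m+1}` is centred and
independent of `V_m`. Hence `E V_n² ≤ x₀² + T K₀`, and Chebyshev's inequality gives the bound
`K / C²`. The chain stays nonnegative because `σ² ≤ 2b` makes the discriminant of one step, as
a quadratic in `√x`, nonpositive.
-/

open MeasureTheory ProbabilityTheory

section General

variable {Ω : Type*} [MeasurableSpace Ω] {μ : Measure Ω}

lemma ae_eq_or_eq_neg_of_measure_eq_half_s10 [IsProbabilityMeasure μ] {f : Ω → ℝ}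
    (hf : Measurable f) {s : ℝ} (hs : s ≠ 0) (h₁ : μ {ω | f ω = s} = 1 / 2)
    (h₂ : μ {ω | f ω = -s} = 1 / 2) :
    ∀ᵐ ω ∂μ, f ω = s ∨ f ω = -s := by
  have hdisj : Disjoint {ω | f ω = s} {ω | f ω = -s} := by
    refine Set.disjoint_left.2 fun ω h₁ h₂ => hs ?_
    simp only [Set.mem_ofPred_eq] at h₁ h₂
    linarith
  have hA (t : ℝ) : MeasurableSet {ω | f ω = t} := hf (measurableSet_singleton t)
  refine (ae_iff_measure_eq (p := fun ω => f ω = s ∨ f ω = -s)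
    ((hA s).union (hA (-s))).nullMeasurableSet).2 ?_
  rw [measure_univ, Set.ofPred_or]
  calc μ ({ω | f ω = s} ∪ {ω | f ω = -s}) = 1 / 2 + 1 / 2 := by
        rw [measure_union hdisj (hA (-s)), h₁, h₂]
    _ = 1 := ENNReal.add_halves 1

lemma ae_sq_eq_of_measure_eq_half [IsProbabilityMeasure μ] {f : Ω → ℝ}
    (hf : Measurable f) {s : ℝ} (hs : s ≠ 0) (h₁ : μ {ω | f ω = s} = 1 / 2)
    (h₂ : μ {ω | f ω = -s} = 1 / 2) :
    ∀ᵐ ω ∂μ, f ω ^ 2 = s ^ 2 := by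
  filter_upwards [ae_eq_or_eq_neg_of_measure_eq_half_s10 hf hs h₁ h₂] with ω h
  rcases h with h | h <;> simp [h]

lemma integral_eq_zero_of_measure_eq_half [IsProbabilityMeasure μ] {f : Ω → ℝ}
    (hf : Measurable f) {s : ℝ} (hs : s ≠ 0) (h₁ : μ {ω | f ω = s} = 1 / 2)
    (h₂ : μ {ω | f ω = -s} = 1 / 2) :
    ∫ ω, f ω ∂μ = 0 := by
  have hf2 := ae_eq_or_eq_neg_of_measure_eq_half_s10 hf hs h₁ h₂
  have hA : MeasurableSet {ω | f ω = s} := hf (measurableSet_singleton s)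
  have hfi : Integrable f μ := Integrable.of_bound hf.aestronglyMeasurable |s| <| by
    filter_upwards [hf2] with ω h
    rcases h with h | h <;> simp [h]
  have hAc : ∀ᵐ ω ∂μ.restrict {ω | f ω = s}ᶜ, f ω = -s := by
    filter_upwards [ae_restrict_mem hA.compl, ae_restrict_of_ae hf2] with ω hω h
    exact h.resolve_left hω
  rw [← integral_add_compl hA hfi, setIntegral_congr_fun hA (fun ω h => h),
    setIntegral_congr_ae hA.compl ((ae_restrict_iff' hA.compl).1 hAc), setIntegral_const,
    setIntegral_const, probReal_compl_eq_one_sub hA, measureReal_def, h₁]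
  norm_num

lemma ProbabilityTheory.iIndepFun.indepFun_of_measurable_iSup {ι β γ : Type*}
    [MeasurableSpace β] [MeasurableSpace γ] {g : ι → Ω → β} (hind : iIndepFun g μ)
    (hg : ∀ i, Measurable (g i)) {S : Set ι} {j : ι} (hj : j ∉ S) {f : Ω → γ}
    (hf : Measurable[⨆ i ∈ S, MeasurableSpace.comap (g i) ‹_›] f) :
    IndepFun f (g j) μ := by
  rw [IndepFun_iff_Indep]
  refine indep_of_indep_of_le (indep_iSup_of_disjoint (fun i => (hg i).comap_le) hind.iIndep
    (Set.disjoint_singleton_right.2 hj)) (measurable_iff_comap_le.1 hf) ?_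
  exact le_iSup₂ (f := fun i (_ : i ∈ ({j} : Set ι)) => MeasurableSpace.comap (g i) ‹_›) j rfl

lemma integrable_indicator_Iic_comp [IsFiniteMeasure μ] {f : ℝ → ℝ} (hf : Continuous f)
    (C : ℝ) {V : Ω → ℝ} (hV : Measurable V) (hV0 : ∀ᵐ ω ∂μ, 0 ≤ V ω) :
    Integrable (fun ω => (Set.Iic C).indicator f (V ω)) μ := by
  obtain ⟨M, hM⟩ :=
    (isCompact_Icc (a := 0) (b := C)).exists_bound_of_continuousOn hf.continuousOn
  refine Integrable.of_bound
    ((hf.measurable.indicator measurableSet_Iic).comp hV).aestronglyMeasurable (max M 0) ?_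
  filter_upwards [hV0] with ω hω
  by_cases hC : V ω ≤ C
  · rw [Set.indicator_of_mem (show V ω ∈ Set.Iic C from hC)]
    exact (hM _ ⟨hω, hC⟩).trans (le_max_left _ _)
  · rw [Set.indicator_of_notMem (show V ω ∉ Set.Iic C from hC), norm_zero]
    exact le_max_right _ _

lemma measure_ge_le_integral_sq_div [IsFiniteMeasure μ] {f : Ω → ℝ}
    (hf : Integrable (fun ω => f ω ^ 2) μ) {c : ℝ} (hc : 0 < c) :
    μ {ω | c ≤ f ω} ≤ ENNReal.ofReal ((∫ ω, f ω ^ 2 ∂μ) / c ^ 2) := by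
  have hmarkov :=
    mul_meas_ge_le_integral_of_nonneg (ae_of_all μ fun ω => sq_nonneg (f ω)) hf (c ^ 2)
  calc μ {ω | c ≤ f ω} ≤ μ {ω | c ^ 2 ≤ f ω ^ 2} :=
        measure_mono fun ω (h : c ≤ f ω) =>
          show c ^ 2 ≤ f ω ^ 2 from pow_le_pow_left₀ hc.le h 2
    _ = ENNReal.ofReal (μ.real {ω | c ^ 2 ≤ f ω ^ 2}) := (ofReal_measureReal).symm
    _ ≤ _ := ENNReal.ofReal_le_ofReal <| by
        rw [le_div_iff₀ (by positivity), mul_comm]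
        exact hmarkov

end General

namespace CIREuler

noncomputable section

variable (b σ dt : ℝ)

def step (x e : ℝ) : ℝ := x + (b - x) * dt + σ * e * √x

def truncatedStep (C y e : ℝ) : ℝ := y + (b - min y C) * dt + σ * e * √(min y C)

def sqDrift (x : ℝ) : ℝ := (2 * x + (b - x) * dt) * ((b - x) * dt) + σ ^ 2 * x * dt

def sqNoise (x : ℝ) : ℝ := 2 * σ * √x * (x + (b - x) * dt)

def stoppedStep (C x e : ℝ) : ℝ := if x ≤ C then step b σ dt x e else x

def stoppedChain (C x₀ : ℝ) (e : ℕ → ℝ) : ℕ → ℝ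
  | 0 => x₀
  | m + 1 => stoppedStep b σ dt C (stoppedChain C x₀ e m) (e (m + 1))

end

variable {b σ dt}

lemma step_nonneg (hσ2 : σ ^ 2 ≤ 2 * b) (hdt : dt ≤ 1 / 2) {x e : ℝ} (hx : 0 ≤ x)
    (he : e ^ 2 = dt) : 0 ≤ step b σ dt x e := by
  have hdt0 : 0 ≤ dt := he ▸ sq_nonneg e
  have hb : 0 ≤ b := by nlinarith [sq_nonneg σ]
  obtain ⟨s, hs0, rfl⟩ : ∃ s, 0 ≤ s ∧ s ^ 2 = x := ⟨√x, Real.sqrt_nonneg x, Real.sq_sqrt hx⟩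
  set a := |σ * e|
  have ha : a ^ 2 = σ ^ 2 * dt := by rw [sq_abs, mul_pow, he]
  -- completing the square in `s = √x`; the discriminant is `dt (σ² - 4 b (1 - dt)) ≤ 0`
  have hquad : 0 ≤ (1 - dt) * s ^ 2 - a * s + b * dt := by
    refine (mul_nonneg_iff_of_pos_left (by linarith : (0 : ℝ) < 4 * (1 - dt))).mp ?_
    nlinarith [sq_nonneg (2 * (1 - dt) * s - a),
      mul_nonneg hdt0 (by linarith : 0 ≤ 2 * b - σ ^ 2),
      mul_nonneg (mul_nonneg hdt0 hb) (by linarith : (0 : ℝ) ≤ 2 - 4 * dt)]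
  have hnoise : -(a * s) ≤ σ * e * s := by nlinarith [neg_abs_le (σ * e)]
  unfold step
  rw [Real.sqrt_sq hs0]
  linarith

lemma step_sq {x e : ℝ} (hx : 0 ≤ x) (he : e ^ 2 = dt) :
    step b σ dt x e ^ 2 = x ^ 2 + sqDrift b σ dt x + sqNoise b σ dt x * e := by
  unfold step sqDrift sqNoise
  linear_combination (σ ^ 2 * e ^ 2) * Real.sq_sqrt hx + (σ ^ 2 * x) * he

lemma sqDrift_le (hdt0 : 0 ≤ dt) (hdt : dt ≤ 1 / 2) (x : ℝ) :
    sqDrift b σ dt x ≤ dt * (b ^ 2 + (b + σ ^ 2) ^ 2) := by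
  have h : 2 * x * (b - x) + (b - x) ^ 2 * dt + σ ^ 2 * x ≤ b ^ 2 + (b + σ ^ 2) ^ 2 := by
    nlinarith [mul_nonneg (sq_nonneg (b - x)) (by linarith : 0 ≤ 1 / 2 - dt),
      sq_nonneg (3 * x - (b + σ ^ 2)), sq_nonneg (b + σ ^ 2)]
  calc sqDrift b σ dt x = dt * (2 * x * (b - x) + (b - x) ^ 2 * dt + σ ^ 2 * x) := by
        unfold sqDrift; ring
    _ ≤ _ := mul_le_mul_of_nonneg_left h hdt0

lemma indicator_sqDrift_le (hdt0 : 0 ≤ dt) (hdt : dt ≤ 1 / 2) (C x : ℝ) :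
    (Set.Iic C).indicator (sqDrift b σ dt) x ≤ dt * (b ^ 2 + (b + σ ^ 2) ^ 2) :=
  Set.indicator_apply_le' (fun _ => sqDrift_le hdt0 hdt x) fun _ => by positivity

lemma truncatedStep_of_le {C y : ℝ} (hy : y ≤ C) (e : ℝ) :
    truncatedStep b σ dt C y e = step b σ dt y e := by
  simp [truncatedStep, step, min_eq_left hy]

lemma stoppedStep_nonneg (hσ2 : σ ^ 2 ≤ 2 * b) (hdt : dt ≤ 1 / 2) (C : ℝ) {x e : ℝ}
    (hx : 0 ≤ x) (he : e ^ 2 = dt) : 0 ≤ stoppedStep b σ dt C x e := by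
  unfold stoppedStep
  split_ifs
  exacts [step_nonneg hσ2 hdt hx he, hx]

lemma stoppedStep_sq (C : ℝ) {x e : ℝ} (hx : 0 ≤ x) (he : e ^ 2 = dt) :
    stoppedStep b σ dt C x e ^ 2 = x ^ 2 + (Set.Iic C).indicator (sqDrift b σ dt) x
      + (Set.Iic C).indicator (sqNoise b σ dt) x * e := by
  by_cases hxC : x ≤ C
  · simp [stoppedStep, hxC, step_sq hx he]
  · simp [stoppedStep, hxC]

lemma measurable_stoppedStep (C : ℝ) :
    Measurable fun p : ℝ × ℝ => stoppedStep b σ dt C p.1 p.2 := by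
  refine Measurable.ite (measurableSet_le measurable_fst measurable_const) ?_ measurable_fst
  unfold step
  fun_prop

section Chain

variable {C x₀ : ℝ} {e x : ℕ → ℝ} {n : ℕ}

lemma stoppedChain_succ_of_le {m : ℕ} (h : stoppedChain b σ dt C x₀ e m ≤ C) :
    stoppedChain b σ dt C x₀ e (m + 1) =
      step b σ dt (stoppedChain b σ dt C x₀ e m) (e (m + 1)) :=
  if_pos h

lemma stoppedChain_succ_of_lt {m : ℕ} (h : C < stoppedChain b σ dt C x₀ e m) :
    stoppedChain b σ dt C x₀ e (m + 1) = stoppedChain b σ dt C x₀ e m :=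
  if_neg h.not_ge

lemma stoppedChain_eq_of_le (hx0 : x 0 = x₀)
    (hx : ∀ m < n, x (m + 1) = step b σ dt (x m) (e (m + 1))) {m : ℕ} (hm : m ≤ n)
    (hC : stoppedChain b σ dt C x₀ e m ≤ C) :
    stoppedChain b σ dt C x₀ e m = x m := by
  induction m with
  | zero => exact hx0.symm
  | succ m ih =>
    rcases le_or_gt (stoppedChain b σ dt C x₀ e m) C with hmC | hmC
    · rw [stoppedChain_succ_of_le hmC, ih (by omega) hmC, hx m (by omega)]
    · rw [stoppedChain_succ_of_lt hmC] at hC ⊢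
      exact absurd hC hmC.not_ge

lemma lt_stoppedChain (hx0 : x 0 = x₀)
    (hx : ∀ m < n, x (m + 1) = step b σ dt (x m) (e (m + 1))) {j m : ℕ} (hm : m ≤ n)
    (hj : j ≤ m) (hxj : C < x j) :
    C < stoppedChain b σ dt C x₀ e m := by
  induction m with
  | zero => simpa [stoppedChain, Nat.le_zero.mp hj, hx0] using hxj
  | succ m ih =>
    rcases le_or_gt (stoppedChain b σ dt C x₀ e m) C with hmC | hmC
    · obtain rfl : j = m + 1 := by
        by_contra hjm
        exact (ih (by omega) (by omega)).not_ge hmC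
      rwa [stoppedChain_succ_of_le hmC, stoppedChain_eq_of_le hx0 hx (by omega) hmC,
        ← hx m (by omega)]
    · rwa [stoppedChain_succ_of_lt hmC]

lemma lt_stoppedChain_of_ne_truncated {y : ℕ → ℝ} (hx0 : x 0 = x₀) (hy0 : y 0 = x₀)
    (hx : ∀ m < n, x (m + 1) = step b σ dt (x m) (e (m + 1)))
    (hy : ∀ m < n, y (m + 1) = truncatedStep b σ dt C (y m) (e (m + 1)))
    (hne : ∃ k ≤ n, x k ≠ y k) : C < stoppedChain b σ dt C x₀ e n := by
  obtain ⟨j, hj, hxj⟩ : ∃ j < n, C < x j := by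
    by_contra! hle
    obtain ⟨k, hk, hxyk⟩ := hne
    refine hxyk ?_
    clear hxyk
    induction k with
    | zero => rw [hx0, hy0]
    | succ k ih => rw [hx k hk, hy k hk, ← ih (by omega), truncatedStep_of_le (hle k hk)]
  exact lt_stoppedChain hx0 hx le_rfl hj.le hxj

end Chain

lemma measurable_stoppedChain {Ω : Type*} {M : MeasurableSpace Ω} (C x₀ : ℝ)
    {q : ℕ → Ω → ℝ} {m : ℕ} (hq : ∀ k, 1 ≤ k → k ≤ m → Measurable[M] (q k)) :
    Measurable[M] fun ω => stoppedChain b σ dt C x₀ (fun k => q k ω) m := by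
  induction m with
  | zero => exact measurable_const
  | succ m ih =>
    exact (measurable_stoppedStep C).comp
      ((ih fun k hk hkm => hq k hk (by omega)).prodMk (hq (m + 1) (by omega) le_rfl))

section Moments

variable {Ω : Type*} [MeasurableSpace Ω] {μ : Measure Ω} {C x₀ : ℝ} {n : ℕ}
  {q : ℕ → Ω → ℝ}

lemma ae_stoppedChain_nonneg (hσ2 : σ ^ 2 ≤ 2 * b) (hdt : dt ≤ 1 / 2) (hx₀ : 0 ≤ x₀)
    (hq2 : ∀ k, 1 ≤ k → k ≤ n → ∀ᵐ ω ∂μ, q k ω ^ 2 = dt) {m : ℕ} (hm : m ≤ n) :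
    ∀ᵐ ω ∂μ, 0 ≤ stoppedChain b σ dt C x₀ (fun k => q k ω) m := by
  induction m with
  | zero => exact ae_of_all μ fun _ => hx₀
  | succ m ih =>
    filter_upwards [ih (by omega), hq2 (m + 1) (by omega) hm] with ω h₀ h₂
    exact stoppedStep_nonneg hσ2 hdt C h₀ h₂

lemma indepFun_comp_stoppedChain (hq : ∀ k, Measurable (q k))
    (hind : iIndepFun (fun i : Fin n => q (i + 1)) μ) {m : ℕ} (hm : m < n) {f : ℝ → ℝ}
    (hf : Measurable f) :
    IndepFun (fun ω => f (stoppedChain b σ dt C x₀ (fun k => q k ω) m)) (q (m + 1)) μ := by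
  refine hind.indepFun_of_measurable_iSup (fun i => hq _) (S := {i | (i : ℕ) < m})
    (j := ⟨m, hm⟩) (lt_irrefl m) (hf.comp (measurable_stoppedChain C x₀ fun k hk hkm => ?_))
  rw [measurable_iff_comap_le]
  have := le_iSup₂ (f := fun (i : Fin n) (_ : i ∈ {i : Fin n | (i : ℕ) < m}) =>
    MeasurableSpace.comap (q ((i : ℕ) + 1)) inferInstance) ⟨k - 1, by omega⟩
    (show k - 1 < m by omega)
  simpa [Nat.sub_add_cancel hk] using this

lemma integral_stoppedChain_succ_sq_le [IsProbabilityMeasure μ] (hσ2 : σ ^ 2 ≤ 2 * b)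
    (hdt0 : 0 ≤ dt) (hdt : dt ≤ 1 / 2) (hx₀ : 0 ≤ x₀) (hq : ∀ k, Measurable (q k))
    (hind : iIndepFun (fun i : Fin n => q (i + 1)) μ)
    (hq2 : ∀ k, 1 ≤ k → k ≤ n → ∀ᵐ ω ∂μ, q k ω ^ 2 = dt)
    (hq0 : ∀ k, 1 ≤ k → k ≤ n → ∫ ω, q k ω ∂μ = 0) {m : ℕ} (hm : m < n)
    (hint : Integrable (fun ω => stoppedChain b σ dt C x₀ (fun k => q k ω) m ^ 2) μ) :
    Integrable (fun ω => stoppedChain b σ dt C x₀ (fun k => q k ω) (m + 1) ^ 2) μ ∧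
      ∫ ω, stoppedChain b σ dt C x₀ (fun k => q k ω) (m + 1) ^ 2 ∂μ ≤
        ∫ ω, stoppedChain b σ dt C x₀ (fun k => q k ω) m ^ 2 ∂μ
          + dt * (b ^ 2 + (b + σ ^ 2) ^ 2) := by
  set V := fun m ω => stoppedChain b σ dt C x₀ (fun k => q k ω) m
  set D := (Set.Iic C).indicator (sqDrift b σ dt)
  set N := (Set.Iic C).indicator (sqNoise b σ dt)
  have hV0 := ae_stoppedChain_nonneg (μ := μ) (C := C) hσ2 hdt hx₀ hq2 hm.le
  have hVm : Measurable (V m) := measurable_stoppedChain C x₀ fun k _ _ => hq k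
  have hD : Integrable (fun ω => D (V m ω)) μ :=
    integrable_indicator_Iic_comp (by unfold sqDrift; fun_prop) C hVm hV0
  have hN : Integrable (fun ω => N (V m ω)) μ :=
    integrable_indicator_Iic_comp (by unfold sqNoise; fun_prop) C hVm hV0
  have hqi : Integrable (q (m + 1)) μ :=
    Integrable.of_bound (hq _).aestronglyMeasurable √dt <| by
      filter_upwards [hq2 (m + 1) (by omega) hm] with ω h
      rw [Real.norm_eq_abs, ← Real.sqrt_sq_eq_abs, h]
  have hindep : IndepFun (fun ω => N (V m ω)) (q (m + 1)) μ :=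
    indepFun_comp_stoppedChain hq hind hm
      ((by unfold sqNoise; fun_prop : Measurable (sqNoise b σ dt)).indicator measurableSet_Iic)
  have hNq : Integrable (fun ω => N (V m ω) * q (m + 1) ω) μ := hindep.integrable_mul hN hqi
  have hVD : Integrable (fun ω => V m ω ^ 2 + D (V m ω)) μ := hint.add hD
  have hsq : (fun ω => V (m + 1) ω ^ 2)
      =ᵐ[μ] fun ω => V m ω ^ 2 + D (V m ω) + N (V m ω) * q (m + 1) ω := by
    filter_upwards [hV0, hq2 (m + 1) (by omega) hm] with ω h₀ h₂
    exact stoppedStep_sq C h₀ h₂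
  refine ⟨(hVD.add hNq).congr hsq.symm, ?_⟩
  calc ∫ ω, V (m + 1) ω ^ 2 ∂μ
      = ∫ ω, V m ω ^ 2 ∂μ + ∫ ω, D (V m ω) ∂μ + ∫ ω, N (V m ω) * q (m + 1) ω ∂μ := by
        rw [integral_congr_ae hsq, integral_add hVD hNq, integral_add hint hD]
    _ = ∫ ω, V m ω ^ 2 ∂μ + ∫ ω, D (V m ω) ∂μ := by
        rw [hindep.integral_fun_mul_eq_mul_integral hN.aestronglyMeasurable
          hqi.aestronglyMeasurable, hq0 _ (by omega) hm, mul_zero, add_zero]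
    _ ≤ _ := by
        gcongr
        calc ∫ ω, D (V m ω) ∂μ ≤ ∫ _, dt * (b ^ 2 + (b + σ ^ 2) ^ 2) ∂μ :=
              integral_mono hD (integrable_const _) fun ω => indicator_sqDrift_le hdt0 hdt C _
          _ = _ := by simp

theorem integral_sq_stoppedChain_le [IsProbabilityMeasure μ] (hσ2 : σ ^ 2 ≤ 2 * b)
    (hdt0 : 0 ≤ dt) (hdt : dt ≤ 1 / 2) (hx₀ : 0 ≤ x₀) (hq : ∀ k, Measurable (q k))
    (hind : iIndepFun (fun i : Fin n => q (i + 1)) μ)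
    (hq2 : ∀ k, 1 ≤ k → k ≤ n → ∀ᵐ ω ∂μ, q k ω ^ 2 = dt)
    (hq0 : ∀ k, 1 ≤ k → k ≤ n → ∫ ω, q k ω ∂μ = 0) {m : ℕ} (hm : m ≤ n) :
    Integrable (fun ω => stoppedChain b σ dt C x₀ (fun k => q k ω) m ^ 2) μ ∧
      ∫ ω, stoppedChain b σ dt C x₀ (fun k => q k ω) m ^ 2 ∂μ ≤
        x₀ ^ 2 + m * (dt * (b ^ 2 + (b + σ ^ 2) ^ 2)) := by
  induction m with
  | zero => simp [stoppedChain]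
  | succ m ih =>
    obtain ⟨hint, hle⟩ := ih (by omega)
    obtain ⟨hint', hle'⟩ :=
      integral_stoppedChain_succ_sq_le hσ2 hdt0 hdt hx₀ hq hind hq2 hq0 (by omega) hint
    refine ⟨hint', hle'.trans ?_⟩
    push_cast
    linarith

end Moments

end CIREuler

open CIREuler

theorem cir_truncated_coincide_prob_bound_general (b σ T x₀ : ℝ)
    (hσ2 : σ ^ 2 ≤ 2 * b)
    (hT : 0 < T) (hx₀ : 0 < x₀) :
    ∃ K > 0,
      (∀ (n : ℕ), 2 * T < (n : ℝ) → ∀ C : ℝ, 0 < C →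
        ∀ (Ω : Type) (_ : MeasurableSpace Ω) (μ : Measure Ω), IsProbabilityMeasure μ →
        ∀ (q : ℕ → Ω → ℝ), (∀ k, Measurable (q k)) →
        iIndepFun (m := fun _ : Fin n => Real.measurableSpace) (fun i => q (i + 1)) μ →
        (∀ k, 1 ≤ k → k ≤ n →
          μ {ω | q k ω = Real.sqrt (T / n)} = 1 / 2 ∧
            μ {ω | q k ω = -Real.sqrt (T / n)} = 1 / 2) →
        ∀ (X Y : ℕ → Ω → ℝ), (∀ ω, X 0 ω = x₀) → (∀ ω, Y 0 ω = x₀) →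
        (∀ k, 1 ≤ k → k ≤ n → ∀ ω,
          X k ω = X (k - 1) ω + (b - X (k - 1) ω) * T / n
            + σ * q k ω * Real.sqrt (X (k - 1) ω)) →
        (∀ k, 1 ≤ k → k ≤ n → ∀ ω,
          Y k ω = Y (k - 1) ω + (b - min (Y (k - 1) ω) C) * T / n
            + σ * q k ω * Real.sqrt (min (Y (k - 1) ω) C)) →
        μ {ω | ∃ k ≤ n, X k ω ≠ Y k ω} ≤ ENNReal.ofReal (K / C ^ 2)) ∧
      Filter.Tendsto (fun C : ℝ => K / C ^ 2) Filter.atTop (nhds 0) := by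
  refine ⟨x₀ ^ 2 + T * (b ^ 2 + (b + σ ^ 2) ^ 2), by positivity, ?_,
    tendsto_const_nhds.div_atTop (Filter.tendsto_pow_atTop two_ne_zero)⟩
  intro n hn C hC Ω _ μ _ q hq hind hlaw X Y hX0 hY0 hX hY
  have hn0 : (0 : ℝ) < n := by linarith
  have hdt0 : 0 < T / n := div_pos hT hn0
  have hdt : T / n ≤ 1 / 2 := by rw [div_le_iff₀ hn0]; linarith
  have hs : √(T / n) ≠ 0 := (Real.sqrt_pos.2 hdt0).ne'
  have hq2 (k : ℕ) (hk : 1 ≤ k) (hkn : k ≤ n) : ∀ᵐ ω ∂μ, q k ω ^ 2 = T / n := by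
    simpa only [Real.sq_sqrt hdt0.le] using
      ae_sq_eq_of_measure_eq_half (hq k) hs (hlaw k hk hkn).1 (hlaw k hk hkn).2
  have hq0 (k : ℕ) (hk : 1 ≤ k) (hkn : k ≤ n) : ∫ ω, q k ω ∂μ = 0 :=
    integral_eq_zero_of_measure_eq_half (hq k) hs (hlaw k hk hkn).1 (hlaw k hk hkn).2
  have hXstep (ω : Ω) (m : ℕ) (hm : m < n) :
      X (m + 1) ω = step b σ (T / n) (X m ω) (q (m + 1) ω) := by
    rw [hX (m + 1) (by omega) hm ω, Nat.add_sub_cancel, step, mul_div_assoc]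
  have hYstep (ω : Ω) (m : ℕ) (hm : m < n) :
      Y (m + 1) ω = truncatedStep b σ (T / n) C (Y m ω) (q (m + 1) ω) := by
    rw [hY (m + 1) (by omega) hm ω, Nat.add_sub_cancel, truncatedStep, mul_div_assoc]
  have hsub : {ω | ∃ k ≤ n, X k ω ≠ Y k ω} ⊆
      {ω | C ≤ stoppedChain b σ (T / n) C x₀ (fun k => q k ω) n} := fun ω hω =>
    (lt_stoppedChain_of_ne_truncated (e := fun k => q k ω) (hX0 ω) (hY0 ω) (hXstep ω)
      (hYstep ω) hω).le
  obtain ⟨hint, hmom⟩ := integral_sq_stoppedChain_le (C := C) hσ2 hdt0.le hdt hx₀.le hq hind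
    hq2 hq0 le_rfl
  calc μ {ω | ∃ k ≤ n, X k ω ≠ Y k ω} ≤ _ := measure_mono hsub
    _ ≤ _ := measure_ge_le_integral_sq_div hint hC
    _ ≤ _ := by
      gcongr
      rwa [← mul_assoc, mul_div_cancel₀ _ hn0.ne'] at hmom

/-- There is a constant `K` depending only on `b, σ, T, x₀` such that for
every `n > 2T` and `C > 0`, the additive Euler scheme `X` and the truncated scheme `Y`
(driven by the same i.i.d. `q_k = ±√(T/n)`) satisfy
`P(∃ k ≤ n, X_k ≠ Y_k) ≤ K/C²`; in particular the probability that the two schemes differ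
tends to 0, uniformly in `n`, as `C → ∞`. -/
theorem cir_truncated_coincide_prob_bound (b σ T x₀ : ℝ)
    (hb : 0 < b) (hσ : 0 < σ) (hσ2 : σ ^ 2 ≤ 2 * b)
    (hT : 0 < T) (hx₀ : 0 < x₀) :
    ∃ K > 0,
      (∀ (n : ℕ), 2 * T < (n : ℝ) → ∀ C : ℝ, 0 < C →
        ∀ (Ω : Type) (_ : MeasurableSpace Ω) (μ : Measure Ω), IsProbabilityMeasure μ →
        ∀ (q : ℕ → Ω → ℝ), (∀ k, Measurable (q k)) →
        iIndepFun (m := fun _ : Fin n => Real.measurableSpace) (fun i => q (i + 1)) μ →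
        (∀ k, 1 ≤ k → k ≤ n →
          μ {ω | q k ω = Real.sqrt (T / n)} = 1 / 2 ∧
            μ {ω | q k ω = -Real.sqrt (T / n)} = 1 / 2) →
        ∀ (X Y : ℕ → Ω → ℝ), (∀ ω, X 0 ω = x₀) → (∀ ω, Y 0 ω = x₀) →
        (∀ k, 1 ≤ k → k ≤ n → ∀ ω,
          X k ω = X (k - 1) ω + (b - X (k - 1) ω) * T / n
            + σ * q k ω * Real.sqrt (X (k - 1) ω)) →
        (∀ k, 1 ≤ k → k ≤ n → ∀ ω,
          Y k ω = Y (k - 1) ω + (b - min (Y (k - 1) ω) C) * T / n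
            + σ * q k ω * Real.sqrt (min (Y (k - 1) ω) C)) →
        μ {ω | ∃ k ≤ n, X k ω ≠ Y k ω} ≤ ENNReal.ofReal (K / C ^ 2)) ∧
      Filter.Tendsto (fun C : ℝ => K / C ^ 2) Filter.atTop (nhds 0) :=
  cir_truncated_coincide_prob_bound_general b σ T x₀ hσ2 hT hx₀
end
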